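/- Let γ, λ be real numbers with λ² ≤ 6, and let J(D) be the 2×2 Jacobian matrix of the map W evaluated at D = (λ/√6, √(1 − λ²/6)). Then the characteristic polynomial of J(D) equals (X − (λ² − 4)/2)·(X − (1 + λ² − 3γ)); equivalently, the eigenvalues of J(D) are (λ² − 4)/2 and 1 + λ² − 3γ. -/

import Mathlib

/-! At D one has x² = λ²/6, y² = 1 − λ²/6 and √6·y = √(6 − λ²), so J(D) collapses to an explicit
matrix whose trace and determinant are the sum and the product of (λ² − 4)/2 and 1 + λ² − 3γ. -/

/-- The Jacobian matrix of the Euler-discretized quintessence map W at (x,y). -/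
noncomputable def J (γ lam x y : ℝ) : Matrix (Fin 2) (Fin 2) ℝ :=
  !![(-2 + 3*γ/2) + x^2*(9 - 9*γ/2) - (3*γ/2)*y^2, -3*γ*x*y + Real.sqrt 6 * lam * y;
     6*x*y - 3*γ*x*y - Real.sqrt (3/2) * lam * y,
       (3*γ/2 + 1) - Real.sqrt (3/2)*lam*x + (3 - 3*γ/2)*x^2 - (9*γ/2)*y^2]

open Polynomial in
theorem Matrix.charpoly_fin_two_eq_mul {R : Type*} [CommRing R] [Nontrivial R]
    (M : Matrix (Fin 2) (Fin 2) R) {a b : R} (htr : M.trace = a + b) (hdet : M.det = a * b) :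
    M.charpoly = (X - C a) * (X - C b) := by
  rw [M.charpoly_fin_two, htr, hdet, C_add, C_mul]
  ring

theorem J_fixedPoint (γ lam : ℝ) (h : lam ^ 2 ≤ 6) :
    J γ lam (lam / √6) √(1 - lam ^ 2 / 6) =
      !![-2 + (3 - γ) / 2 * lam ^ 2, (1 - γ / 2) * lam * √(6 - lam ^ 2);
         (1 - γ) / 2 * lam * √(6 - lam ^ 2), 1 - 3 * γ + γ / 2 * lam ^ 2] := by
  set s := √6
  set t := √(1 - lam ^ 2 / 6)
  have hs : s ^ 2 = 6 := Real.sq_sqrt (by norm_num)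
  have ht : t ^ 2 = 1 - lam ^ 2 / 6 := Real.sq_sqrt (by linarith)
  have hx : lam / s = lam * s / 6 := by
    rw [div_eq_div_iff (by positivity) (by norm_num)]
    linear_combination -lam * hs
  have h32 : √(3 / 2) = s / 2 := by
    rw [show (3 / 2 : ℝ) = 6 / 2 ^ 2 by norm_num, Real.sqrt_div' _ (by norm_num),
      Real.sqrt_sq (by norm_num)]
  have hst : √(6 - lam ^ 2) = s * t := by
    rw [← Real.sqrt_mul (by norm_num)]
    ring_nf
  rw [J, hx, h32, hst]
  ext i j
  fin_cases i <;> fin_cases j <;>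
    simp only [Fin.zero_eta, Fin.mk_one, Fin.isValue, Matrix.of_apply, Matrix.cons_val',
      Matrix.cons_val_zero, Matrix.cons_val_one, Matrix.cons_val_fin_one]
  · linear_combination lam ^ 2 / 36 * (9 - 9 * γ / 2) * hs - 3 * γ / 2 * ht
  · ring
  · ring
  · linear_combination (-lam ^ 2 / 12 + (3 - 3 * γ / 2) * lam ^ 2 / 36) * hs - 9 * γ / 2 * ht

open Polynomial in
/-- The characteristic polynomial of the Jacobian of W at the fixed point
D = (λ/√6, √(1 − λ²/6)) is (X − (λ² − 4)/2)(X − (1 + λ² − 3γ)). -/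
theorem stmt_7 (γ lam : ℝ) (h : lam^2 ≤ 6) :
    (J γ lam (lam / Real.sqrt 6) (Real.sqrt (1 - lam^2/6))).charpoly =
      (X - C ((lam^2 - 4)/2)) * (X - C (1 + lam^2 - 3*γ)) := by
  rw [J_fixedPoint γ lam h]
  apply Matrix.charpoly_fin_two_eq_mul
  · rw [Matrix.trace_fin_two_of]
    ring
  · rw [Matrix.det_fin_two_of]
    linear_combination (-(1 - γ / 2) * ((1 - γ) / 2) * lam ^ 2) *
      Real.sq_sqrt (by linarith : (0 : ℝ) ≤ 6 - lam ^ 2)
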